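/- arXiv:1412.4307 — 4 statements merged into one kernel-verified Lean document; each statement's English description precedes it below -/
import Mathlib

section
/- Let G(x) = (1/2)e^{-|x|} and let α ∈ (0,1). Define for each positive integer N the weight J_N(x) = e^{αN} for x < -N, J_N(x) = e^{-αx} for -N ≤ x ≤ 0, and J_N(x) = 1 for x > 0. Then there exists a constant C₀ > 0, independent of N, such that J_N(x)·(G ∗ J_N^{-1})(x) ≤ C₀ for all x ∈ ℝ, where (G ∗ J_N^{-1})(x) = ∫_ℝ G(x-y)/J_N(y) dy. -/
/-!
`J_N = exp ∘ φ_N` with `φ_N(x) = α · min(N, max(-x, 0))`, which is `α`-Lipschitz. Hence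
`J_N(x) / J_N(y) ≤ e^{α|x - y|}`, and `J_N(x) (G ∗ J_N⁻¹)(x)` is at most
`∫ ½ e^{-(1-α)|x-y|} dy = 1 / (1 - α)`, whatever `N` is.
-/

open MeasureTheory Real
open scoped NNReal

/-- The weight function `J_N`. -/
noncomputable def J (α : ℝ) (N : ℕ) (x : ℝ) : ℝ :=
  if x < -(N : ℝ) then Real.exp (α * N)
  else if x ≤ 0 then Real.exp (-α * x)
  else 1

theorem integral_exp_neg_mul_abs {c : ℝ} (hc : 0 < c) : ∫ z : ℝ, exp (-c * |z|) = 2 / c := by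
  rw [integral_comp_abs (f := fun z => exp (-c * z)), integral_exp_mul_Ioi (neg_neg_of_pos hc)]
  field_simp
  simp

theorem integrable_exp_neg_mul_abs {c : ℝ} (hc : 0 < c) :
    Integrable fun z : ℝ => exp (-c * |z|) :=
  .of_integral_ne_zero <| by rw [integral_exp_neg_mul_abs hc]; positivity

theorem exp_mul_integral_green_div_exp_le {φ : ℝ → ℝ} {K : ℝ≥0} (hφ : LipschitzWith K φ)
    (hK : (K : ℝ) < 1) (x : ℝ) :
    exp (φ x) * ∫ y, (1 / 2) * exp (-|x - y|) / exp (φ y) ≤ 1 / (1 - K) := by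
  have hc : 0 < 1 - (K : ℝ) := sub_pos.mpr hK
  have pointwise (y : ℝ) :
      exp (φ x) * ((1 / 2) * exp (-|x - y|) / exp (φ y)) ≤ (1 / 2) * exp (-(1 - K) * |x - y|) := by
    have hxy : φ x - φ y ≤ K * |x - y| := by
      simpa only [Real.dist_eq] using (le_abs_self _).trans (hφ.dist_le_mul x y)
    rw [mul_div_assoc', mul_left_comm, mul_div_assoc, ← exp_add, ← exp_sub]
    gcongr
    linarith
  calc exp (φ x) * ∫ y, (1 / 2) * exp (-|x - y|) / exp (φ y)
      = ∫ y, exp (φ x) * ((1 / 2) * exp (-|x - y|) / exp (φ y)) := (integral_const_mul _ _).symm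
    _ ≤ ∫ y, (1 / 2) * exp (-(1 - K) * |x - y|) :=
        integral_mono_of_nonneg (.of_forall fun y => by positivity)
          (((integrable_exp_neg_mul_abs hc).comp_sub_left x).const_mul _) (.of_forall pointwise)
    _ = 1 / (1 - K) := by
        rw [integral_const_mul, integral_sub_left_eq_self (fun z => exp (-(1 - K) * |z|)),
          integral_exp_neg_mul_abs hc]
        field_simp

theorem J_eq_exp (α : ℝ) (N : ℕ) (x : ℝ) : J α N x = exp (α * min (N : ℝ) (max (-x) 0)) := by
  have hN : (0 : ℝ) ≤ N := N.cast_nonneg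
  unfold J
  split_ifs with h₁ h₂
  · rw [max_eq_left (by linarith), min_eq_left (by linarith)]
  · rw [max_eq_left (by linarith), min_eq_right (by linarith), neg_mul_comm]
  · rw [max_eq_right (by linarith), min_eq_right hN, mul_zero, exp_zero]

theorem lipschitzWith_log_J {α : ℝ} (hα : 0 ≤ α) (N : ℕ) :
    LipschitzWith ⟨α, hα⟩ fun x : ℝ => α * min (N : ℝ) (max (-x) 0) := by
  have h := (lipschitzWith_smul α).comp ((LipschitzWith.id.neg.max_const 0).const_min (N : ℝ))
  simp only [Real.nnnorm_of_nonneg hα, mul_one, Function.comp_def, smul_eq_mul,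
    Pi.neg_apply, id_eq] at h
  exact h

/-- `J_N(x) (G ∗ J_N⁻¹)(x) ≤ C₀` uniformly in `N` and `x`, where `G(x) = (1/2)e^{-|x|}`. -/
theorem JN_weighted_conv_bound (α : ℝ) (hα : α ∈ Set.Ioo (0:ℝ) 1) :
    ∃ C₀ > (0:ℝ), ∀ N : ℕ, 0 < N → ∀ x : ℝ,
      J α N x * (∫ y : ℝ, (1/2) * Real.exp (-|x - y|) / J α N y) ≤ C₀ := by
  obtain ⟨hα₀, hα₁⟩ := hα
  refine ⟨1 / (1 - α), one_div_pos.mpr (sub_pos.mpr hα₁), fun N _ x => ?_⟩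
  simp only [J_eq_exp]
  exact exp_mul_integral_green_div_exp_le (lipschitzWith_log_J hα₀.le N) hα₁ x
end

section
/- Let α ∈ (0,1), N a positive integer, and J_N the weight equal to e^{αN} on (-∞,-N), e^{-αx} on [-N,0], and 1 on (0,∞). For x ∈ [-N,0], the quantity f(x) = J_N(x) ∫_ℝ e^{-|x-y|}/J_N(y) dy satisfies f(x) ≤ (3-α²)/(1-α²). -/
/-!
`J` is `exp (α · min N (max (-y) 0))`, so for `α ≥ 0` it is antitone and `log J` is
`α`-Lipschitz. After substituting `y = x + t`, the integrand `J x e^{-|t|} / J (x + t)` is at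
most `e^t` for `t ≤ -N - x`, equals `e^{(1+α)t}` on `[-N - x, 0]` and is at most `e^{-(1-α)t}`
for `t ≥ 0`. The three pieces contribute at most `1`, `1/(1+α)` and `1/(1-α)`, and
`1 + 1/(1+α) + 1/(1-α) = (3 - α²)/(1 - α²)`.
-/

open MeasureTheory Real

open Set

section ThreePieces

variable {μ : Measure ℝ} {a b : ℝ}

theorem integral_eq_Iic_add_Ioc_add_Ioi {E : Type*} [NormedAddCommGroup E] [NormedSpace ℝ E]
    {f : ℝ → E} (hab : a ≤ b) (h₁ : IntegrableOn f (Iic a) μ) (h₂ : IntegrableOn f (Ioc a b) μ)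
    (h₃ : IntegrableOn f (Ioi b) μ) :
    ∫ t, f t ∂μ = (∫ t in Iic a, f t ∂μ) + (∫ t in Ioc a b, f t ∂μ) + ∫ t in Ioi b, f t ∂μ := by
  rw [← setIntegral_union (Iic_disjoint_Ioc le_rfl) measurableSet_Ioc h₁ h₂,
    Iic_union_Ioc_eq_Iic hab]
  have h₁₂ : IntegrableOn f (Iic b) μ := Iic_union_Ioc_eq_Iic hab ▸ h₁.union h₂
  exact (intervalIntegral.integral_Iic_add_Ioi h₁₂ h₃).symm

theorem integral_le_of_le_on_Iic_Ioc_Ioi {f g₁ g₂ g₃ : ℝ → ℝ} (hab : a ≤ b)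
    (hf : AEStronglyMeasurable f μ) (hf₀ : 0 ≤ f)
    (hg₁ : IntegrableOn g₁ (Iic a) μ) (hg₂ : IntegrableOn g₂ (Ioc a b) μ)
    (hg₃ : IntegrableOn g₃ (Ioi b) μ)
    (h₁ : ∀ t ∈ Iic a, f t ≤ g₁ t) (h₂ : ∀ t ∈ Ioc a b, f t ≤ g₂ t)
    (h₃ : ∀ t ∈ Ioi b, f t ≤ g₃ t) :
    ∫ t, f t ∂μ ≤ (∫ t in Iic a, g₁ t ∂μ) + (∫ t in Ioc a b, g₂ t ∂μ) + ∫ t in Ioi b, g₃ t ∂μ := by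
  have piece : ∀ {s : Set ℝ} {g : ℝ → ℝ}, MeasurableSet s → IntegrableOn g s μ →
      (∀ t ∈ s, f t ≤ g t) → IntegrableOn f s μ ∧ ∫ t in s, f t ∂μ ≤ ∫ t in s, g t ∂μ := by
    intro s g hs hg hfg
    have hf_int : IntegrableOn f s μ :=
      integrable_of_le_of_le hf.restrict (ae_of_all _ hf₀)
        ((ae_restrict_iff' hs).2 (ae_of_all _ hfg)) (integrable_zero _ _ _) hg
    exact ⟨hf_int, setIntegral_mono_on hf_int hg hs hfg⟩
  obtain ⟨i₁, le₁⟩ := piece measurableSet_Iic hg₁ h₁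
  obtain ⟨i₂, le₂⟩ := piece measurableSet_Ioc hg₂ h₂
  obtain ⟨i₃, le₃⟩ := piece measurableSet_Ioi hg₃ h₃
  rw [integral_eq_Iic_add_Ioc_add_Ioi hab i₁ i₂ i₃]
  gcongr

end ThreePieces

theorem setIntegral_exp_mul_Ioc_le {a : ℝ} (ha : 0 < a) (c : ℝ) :
    ∫ t in Ioc c 0, exp (a * t) ≤ 1 / a := by
  calc ∫ t in Ioc c 0, exp (a * t)
      ≤ ∫ t in Iic 0, exp (a * t) :=
        setIntegral_mono_set (integrableOn_exp_mul_Iic ha 0)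
          (ae_of_all _ fun t => (exp_pos _).le) Ioc_subset_Iic_self.eventuallyLE
    _ = 1 / a := by rw [integral_exp_mul_Iic ha, mul_zero, exp_zero]

section Weight

variable {α : ℝ} {N : ℕ}

theorem J_eq_exp_mul_min_max (y : ℝ) : J α N y = exp (α * min (N : ℝ) (max (-y) 0)) := by
  have hN : (0 : ℝ) ≤ N := N.cast_nonneg
  unfold J
  split_ifs
  · rw [max_eq_left (by linarith), min_eq_left (by linarith)]
  · rw [max_eq_left (by linarith), min_eq_right (by linarith), neg_mul_comm]
  · rw [max_eq_right (by linarith), min_eq_right hN, mul_zero, exp_zero]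

theorem J_pos (y : ℝ) : 0 < J α N y := by
  rw [J_eq_exp_mul_min_max]; exact exp_pos _

theorem continuous_J : Continuous (J α N) := by
  simp_rw [funext J_eq_exp_mul_min_max]; fun_prop

theorem antitone_J (hα : 0 ≤ α) : Antitone (J α N) := by
  intro x y hxy
  simp only [J_eq_exp_mul_min_max, exp_le_exp]
  gcongr

theorem J_le_mul_exp_abs (hα : 0 ≤ α) (x y : ℝ) : J α N x ≤ J α N y * exp (α * |x - y|) := by
  have hlip : |min (N : ℝ) (max (-x) 0) - min (N : ℝ) (max (-y) 0)| ≤ |x - y| :=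
    calc _ ≤ max |(N : ℝ) - N| |max (-x) 0 - max (-y) 0| := abs_min_sub_min_le_max _ _ _ _
      _ = |max (-x) 0 - max (-y) 0| := by rw [sub_self, abs_zero, max_eq_right (abs_nonneg _)]
      _ ≤ |-x - -y| := abs_max_sub_max_le_abs _ _ _
      _ = |x - y| := by rw [← abs_neg]; ring_nf
  rw [J_eq_exp_mul_min_max, J_eq_exp_mul_min_max, ← exp_add, exp_le_exp]
  nlinarith [(abs_le.1 hlip).2]

theorem J_of_mem_Icc {y : ℝ} (hy : y ∈ Icc (-(N : ℝ)) 0) : J α N y = exp (-α * y) := by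
  unfold J; rw [if_neg (not_lt.2 hy.1), if_pos hy.2]

end Weight

noncomputable def shiftedKernel (α : ℝ) (N : ℕ) (x t : ℝ) : ℝ :=
  J α N x * (exp (-|t|) / J α N (x + t))

section ShiftedKernel

variable {α : ℝ} {N : ℕ} {x t : ℝ}

theorem integral_shiftedKernel :
    ∫ t, shiftedKernel α N x t = J α N x * ∫ y, exp (-|x - y|) / J α N y := by
  rw [← integral_const_mul,
    ← integral_add_left_eq_self (fun y => J α N x * (exp (-|x - y|) / J α N y)) x]
  simp only [shiftedKernel, sub_add_cancel_left, abs_neg]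

theorem shiftedKernel_nonneg : 0 ≤ shiftedKernel α N x :=
  fun _ => mul_nonneg (J_pos x).le (div_nonneg (exp_pos _).le (J_pos _).le)

theorem continuous_shiftedKernel : Continuous (shiftedKernel α N x) :=
  continuous_const.mul <| (continuous_abs.neg.rexp).div
    (continuous_J.comp (continuous_const_add x)) fun _ => (J_pos _).ne'

theorem shiftedKernel_le_exp_of_nonpos (hα : 0 ≤ α) (ht : t ≤ 0) :
    shiftedKernel α N x t ≤ exp t := by
  have hJ : J α N x ≤ J α N (x + t) := antitone_J hα (by linarith)
  rw [shiftedKernel, abs_of_nonpos ht, neg_neg, mul_div_left_comm]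
  exact mul_le_of_le_one_right (exp_pos _).le (div_le_one_of_le₀ hJ (J_pos _).le)

theorem shiftedKernel_eq_of_mem_Icc (hx : x ∈ Icc (-(N : ℝ)) 0) (ht : t ∈ Icc (-N - x) 0) :
    shiftedKernel α N x t = exp ((1 + α) * t) := by
  have hxt : x + t ∈ Icc (-(N : ℝ)) 0 := ⟨by linarith [ht.1], by linarith [ht.2, hx.2]⟩
  rw [shiftedKernel, J_of_mem_Icc hx, J_of_mem_Icc hxt, abs_of_nonpos ht.2, ← exp_sub,
    ← exp_add]
  ring_nf

theorem shiftedKernel_le_exp_of_nonneg (hα : 0 ≤ α) (ht : 0 ≤ t) :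
    shiftedKernel α N x t ≤ exp ((α - 1) * t) := by
  have hJ : J α N x / J α N (x + t) ≤ exp (α * t) := by
    rw [div_le_iff₀ (J_pos _), mul_comm]
    simpa [abs_of_nonneg ht] using J_le_mul_exp_abs hα x (x + t)
  calc shiftedKernel α N x t
      = exp (-t) * (J α N x / J α N (x + t)) := by
        rw [shiftedKernel, abs_of_nonneg ht, mul_div_left_comm]
    _ ≤ exp (-t) * exp (α * t) := by gcongr
    _ = exp ((α - 1) * t) := by rw [← exp_add]; ring_nf

end ShiftedKernel

theorem JN_case2_general (α : ℝ) (hα : α ∈ Set.Ioo (0:ℝ) 1) (N : ℕ)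
    (x : ℝ) (hx : x ∈ Set.Icc (-(N : ℝ)) 0) :
    J α N x * (∫ y : ℝ, Real.exp (-|x - y|) / J α N y) ≤ (3 - α^2) / (1 - α^2) := by
  obtain ⟨hα₀, hα₁⟩ := hα
  have h₁ : ∫ t in Iic (-N - x), exp t ≤ 1 := by
    rw [integral_exp_Iic]; exact exp_le_one_iff.2 (by linarith [hx.1])
  have h₂ := setIntegral_exp_mul_Ioc_le (a := 1 + α) (by linarith) (-N - x)
  have h₃ : ∫ t in Ioi 0, exp ((α - 1) * t) = 1 / (1 - α) := by
    rw [integral_exp_mul_Ioi (by linarith), mul_zero, exp_zero, neg_div, ← div_neg, neg_sub]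
  have hα₂ : (1 : ℝ) - α ^ 2 ≠ 0 := by nlinarith
  calc J α N x * (∫ y : ℝ, Real.exp (-|x - y|) / J α N y)
      = ∫ t, shiftedKernel α N x t := integral_shiftedKernel.symm
    _ ≤ (∫ t in Iic (-N - x), exp t) + (∫ t in Ioc (-N - x) 0, exp ((1 + α) * t))
          + ∫ t in Ioi 0, exp ((α - 1) * t) :=
        integral_le_of_le_on_Iic_Ioc_Ioi (by linarith [hx.1])
          continuous_shiftedKernel.aestronglyMeasurable shiftedKernel_nonneg
          (integrableOn_exp_Iic _)
          ((integrableOn_exp_mul_Iic (by linarith) 0).mono_set Ioc_subset_Iic_self)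
          (integrableOn_exp_mul_Ioi (by linarith) 0)
          (fun t ht => shiftedKernel_le_exp_of_nonpos hα₀.le (by linarith [ht.out, hx.1]))
          (fun t ht => (shiftedKernel_eq_of_mem_Icc hx (Ioc_subset_Icc_self ht)).le)
          (fun t ht => shiftedKernel_le_exp_of_nonneg hα₀.le (le_of_lt ht))
    _ ≤ 1 + 1 / (1 + α) + 1 / (1 - α) := by linarith
    _ = (3 - α^2) / (1 - α^2) := by field_simp; ring

/-- Case 2 (`x ∈ [-N,0]`) of the weighted convolution estimate. -/
theorem JN_case2 (α : ℝ) (hα : α ∈ Set.Ioo (0:ℝ) 1) (N : ℕ) (hN : 0 < N)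
    (x : ℝ) (hx : x ∈ Set.Icc (-(N : ℝ)) 0) :
    J α N x * (∫ y : ℝ, Real.exp (-|x - y|) / J α N y) ≤ (3 - α^2) / (1 - α^2) :=
  JN_case2_general α hα N x hx
end

section
/- Let E₀ > 0 and let Q : [0,T) → ℝ be continuously differentiable with Q(0) < -9E₀√(2E₀) and Q'(t) ≤ -(1/(6E₀))Q(t)² + 27E₀² for all t ∈ [0,T). Then Q(t) < -9E₀√(2E₀) for all t ∈ [0,T), Q is strictly decreasing, and if T is maximal so that Q(t) → -∞ as t ↑ T, then T ≤ (√2/(3√E₀)) · log((Q(0) - 9E₀√(2E₀))/(Q(0) + 9E₀√(2E₀))). -/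
/-!
Since `Q' ≤ a (M² - Q²)` with `a = 1 / (6 E₀)` and `M = 9 E₀ √(2 E₀)`, the right-hand side is
negative as long as `Q < -M`; hence `Q` can never climb back to its initial value, stays below
`-M` and decreases strictly. For the blow-up time, `log (Q - M) - log (Q + M)` has derivative
`2 M Q' / (Q² - M²) ≤ -2 a M` and stays positive, so it can only decrease for a time at most its
initial value divided by `2 a M`.
-/

open Real Filter Set

section DerivSign

variable {D : Set ℝ} {f f' : ℝ → ℝ}

lemma antitoneOn_of_hasDerivAt_nonpos_of_convex (hD : Convex ℝ D)
    (hf : ∀ x ∈ D, HasDerivAt f (f' x) x) (hf' : ∀ x ∈ D, f' x ≤ 0) : AntitoneOn f D :=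
  antitoneOn_of_hasDerivWithinAt_nonpos hD
    (fun x hx ↦ (hf x hx).continuousAt.continuousWithinAt)
    (fun x hx ↦ (hf x (interior_subset hx)).hasDerivWithinAt)
    (fun x hx ↦ hf' x (interior_subset hx))

lemma strictAntiOn_of_hasDerivAt_neg_of_convex (hD : Convex ℝ D)
    (hf : ∀ x ∈ D, HasDerivAt f (f' x) x) (hf' : ∀ x ∈ D, f' x < 0) : StrictAntiOn f D :=
  strictAntiOn_of_hasDerivWithinAt_neg hD
    (fun x hx ↦ (hf x hx).continuousAt.continuousWithinAt)
    (fun x hx ↦ (hf x (interior_subset hx)).hasDerivWithinAt)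
    (fun x hx ↦ hf' x (interior_subset hx))

end DerivSign

lemma sub_sq_neg_of_lt_neg {M x : ℝ} (hM : 0 ≤ M) (hx : x < -M) : M ^ 2 - x ^ 2 < 0 := by
  nlinarith

lemma log_sub_sub_log_add_pos {M x : ℝ} (hM : 0 < M) (hx : x < -M) :
    0 < log (x - M) - log (x + M) := by
  rw [← log_neg_eq_log (x - M), ← log_neg_eq_log (x + M), sub_pos]
  exact log_lt_log (by linarith) (by linarith)

namespace Riccati

variable {a M T : ℝ} {Q Q' : ℝ → ℝ}
  (hQ' : ∀ t ∈ Ico 0 T, HasDerivAt Q (Q' t) t)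
  (hineq : ∀ t ∈ Ico 0 T, Q' t ≤ a * (M ^ 2 - Q t ^ 2))

include hQ' hineq

lemma le_initial (ha : 0 < a) (hM : 0 ≤ M) (h0 : Q 0 < -M) : ∀ t ∈ Ico 0 T, Q t ≤ Q 0 := by
  intro t ht
  have hsub : Icc 0 t ⊆ Ico 0 T := Icc_subset_Ico_right ht.2
  -- fence against the constant `Q 0`: wherever `Q = Q 0`, `Q' ≤ a (M² - Q 0 ²) < 0`
  refine image_le_of_deriv_right_lt_deriv_boundary (B := fun _ ↦ Q 0) (B' := fun _ ↦ 0)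
    (fun x hx ↦ (hQ' x (hsub hx)).continuousAt.continuousWithinAt)
    (fun x hx ↦ (hQ' x (hsub (Ico_subset_Icc_self hx))).hasDerivWithinAt) le_rfl
    (fun _ ↦ hasDerivAt_const _ _) (fun x hx hx0 ↦ ?_) ⟨ht.1, le_rfl⟩
  have hx := hsub (Ico_subset_Icc_self hx)
  calc Q' x ≤ a * (M ^ 2 - Q x ^ 2) := hineq x hx
    _ < 0 := mul_neg_of_pos_of_neg ha (hx0 ▸ sub_sq_neg_of_lt_neg hM h0)

lemma lt_neg (ha : 0 < a) (hM : 0 ≤ M) (h0 : Q 0 < -M) : ∀ t ∈ Ico 0 T, Q t < -M :=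
  fun t ht ↦ (le_initial hQ' hineq ha hM h0 t ht).trans_lt h0

lemma strictAntiOn (ha : 0 < a) (hM : 0 ≤ M) (h0 : Q 0 < -M) : StrictAntiOn Q (Ico 0 T) :=
  strictAntiOn_of_hasDerivAt_neg_of_convex (convex_Ico 0 T) hQ' fun t ht ↦
    (hineq t ht).trans_lt
      (mul_neg_of_pos_of_neg ha (sub_sq_neg_of_lt_neg hM (lt_neg hQ' hineq ha hM h0 t ht)))

lemma antitoneOn_log_sub_log_add_add_mul (ha : 0 < a) (hM : 0 < M) (h0 : Q 0 < -M) :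
    AntitoneOn (fun t ↦ log (Q t - M) - log (Q t + M) + 2 * a * M * t) (Ico 0 T) := by
  have hlt := lt_neg hQ' hineq ha hM.le h0
  refine antitoneOn_of_hasDerivAt_nonpos_of_convex (convex_Ico 0 T)
    (fun t ht ↦ ((((hQ' t ht).sub_const M).log ?_).sub (((hQ' t ht).add_const M).log ?_)).add
      ((hasDerivAt_id t).const_mul (2 * a * M))) fun t ht ↦ ?_
  · linarith [hlt t ht]
  · linarith [hlt t ht]
  have hx := hlt t ht
  have hpos : 0 < Q t ^ 2 - M ^ 2 := by nlinarith
  have hsplit : Q' t / (Q t - M) - Q' t / (Q t + M) = 2 * M * Q' t / (Q t ^ 2 - M ^ 2) := by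
    field_simp [show Q t - M ≠ 0 by linarith, show Q t + M ≠ 0 by linarith]
    ring
  have hbound : 2 * M * Q' t / (Q t ^ 2 - M ^ 2) ≤ -(2 * a * M) := by
    rw [div_le_iff₀ hpos]
    nlinarith [hineq t ht]
  simp only [mul_one]
  linarith

lemma le_log_div (ha : 0 < a) (hM : 0 < M) (h0 : Q 0 < -M) :
    T ≤ log ((Q 0 - M) / (Q 0 + M)) / (2 * a * M) := by
  have hk : 0 < 2 * a * M := by positivity
  have htime : ∀ t ∈ Ico 0 T, 2 * a * M * t < log (Q 0 - M) - log (Q 0 + M) := fun t ht ↦ by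
    have := antitoneOn_log_sub_log_add_add_mul hQ' hineq ha hM h0 ⟨le_rfl, ht.1.trans_lt ht.2⟩
      ht ht.1
    simp only [mul_zero, add_zero] at this
    linarith [log_sub_sub_log_add_pos hM (lt_neg hQ' hineq ha hM.le h0 t ht)]
  rw [log_div (by linarith) (by linarith)]
  by_contra! hT
  have := htime _ ⟨div_nonneg (log_sub_sub_log_add_pos hM h0).le hk.le, hT⟩
  rw [mul_div_cancel₀ _ hk.ne'] at this
  exact this.false

end Riccati

theorem riccati_blowup_general (E₀ T : ℝ) (hE : 0 < E₀) (Q Q' : ℝ → ℝ)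
    (hQ' : ∀ t ∈ Set.Ico 0 T, HasDerivAt Q (Q' t) t)
    (h0 : Q 0 < -9 * E₀ * Real.sqrt (2 * E₀))
    (hineq : ∀ t ∈ Set.Ico 0 T, Q' t ≤ -(1 / (6 * E₀)) * Q t ^ 2 + 27 * E₀ ^ 2) :
    (∀ t ∈ Set.Ico 0 T, Q t < -9 * E₀ * Real.sqrt (2 * E₀)) ∧
    StrictAntiOn Q (Set.Ico 0 T) ∧
    (Tendsto Q (nhdsWithin T (Set.Iio T)) atBot →
      T ≤ Real.sqrt 2 / (3 * Real.sqrt E₀) *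
        Real.log ((Q 0 - 9 * E₀ * Real.sqrt (2 * E₀)) /
          (Q 0 + 9 * E₀ * Real.sqrt (2 * E₀)))) := by
  set s := √(2 * E₀)
  set M := 9 * E₀ * s
  have hs : 0 < s := by positivity
  have hs2 : s ^ 2 = 2 * E₀ := sq_sqrt (by positivity)
  have ha : 0 < 1 / (6 * E₀) := by positivity
  have hM : 0 < M := by positivity
  have hM0 : Q 0 < -M := by linarith
  have hineq' : ∀ t ∈ Ico 0 T, Q' t ≤ 1 / (6 * E₀) * (M ^ 2 - Q t ^ 2) := fun t ht ↦ by
    have hM2 : 1 / (6 * E₀) * M ^ 2 = 27 * E₀ ^ 2 := by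
      rw [mul_pow, mul_pow, hs2]
      field_simp
      ring
    linarith [hineq t ht]
  refine ⟨fun t ht ↦ by linarith [Riccati.lt_neg hQ' hineq' ha hM.le hM0 t ht],
    Riccati.strictAntiOn hQ' hineq' ha hM.le hM0, fun _ ↦ ?_⟩
  have hL := log_sub_sub_log_add_pos hM hM0
  rw [← log_div (by linarith) (by linarith)] at hL
  have hk : 2 * (1 / (6 * E₀)) * M = 3 * s := by
    field_simp
    ring
  have hc : √2 / (3 * √E₀) = 2 / (3 * s) := by
    have : √2 * √E₀ = s := (sqrt_mul zero_le_two E₀).symm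
    rw [← this, div_eq_div_iff (by positivity) (by positivity)]
    linear_combination 3 * √E₀ * mul_self_sqrt (zero_le_two : (0 : ℝ) ≤ 2)
  calc T ≤ log ((Q 0 - M) / (Q 0 + M)) / (3 * s) := hk ▸ Riccati.le_log_div hQ' hineq' ha hM hM0
    _ ≤ 2 / (3 * s) * log ((Q 0 - M) / (Q 0 + M)) := by
      rw [div_mul_eq_mul_div]
      gcongr
      linarith
    _ = _ := by rw [hc]

/-- Riccati comparison argument underlying the blow-up result. -/
theorem riccati_blowup (E₀ T : ℝ) (hE : 0 < E₀) (hT : 0 < T) (Q Q' : ℝ → ℝ)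
    (hQ' : ∀ t ∈ Set.Ico 0 T, HasDerivAt Q (Q' t) t)
    (hQ'cont : ContinuousOn Q' (Set.Ico 0 T))
    (h0 : Q 0 < -9 * E₀ * Real.sqrt (2 * E₀))
    (hineq : ∀ t ∈ Set.Ico 0 T, Q' t ≤ -(1 / (6 * E₀)) * Q t ^ 2 + 27 * E₀ ^ 2) :
    (∀ t ∈ Set.Ico 0 T, Q t < -9 * E₀ * Real.sqrt (2 * E₀)) ∧
    StrictAntiOn Q (Set.Ico 0 T) ∧
    (Tendsto Q (nhdsWithin T (Set.Iio T)) atBot →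
      T ≤ Real.sqrt 2 / (3 * Real.sqrt E₀) *
        Real.log ((Q 0 - 9 * E₀ * Real.sqrt (2 * E₀)) /
          (Q 0 + 9 * E₀ * Real.sqrt (2 * E₀)))) :=
  riccati_blowup_general E₀ T hE Q Q' hQ' h0 hineq
end

section
/- Let E₀ > 0 and Q : [0,T) → ℝ be C¹ with Q(0) < -9E₀√(2E₀) and Q'(t) ≤ -(1/(6E₀))(Q(t) - 9E₀√(2E₀))(Q(t) + 9E₀√(2E₀)). Then for all t ∈ [0,T): ((Q(0)+9E₀√(2E₀))/(Q(0)-9E₀√(2E₀))) e^{(3/2)√(2E₀) t} - 1 ≤ 18E₀√(2E₀)/(Q(t) - 9E₀√(2E₀)) ≤ 0. -/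
open Real Set

/-! The Cayley-type ratio `v = (Q + a) / (Q - a)` linearizes the Riccati inequality
`Q' ≤ -c (Q - a) (Q + a)` into `v' ≥ 2ac v`, so `v` grows at least like `exp (2ac t)`;
and `v - 1 = 2a / (Q - a)`. The division is legitimate because `Q` never rises above `Q 0 < -a`:
at any time where `Q` returns to the level `Q 0`, the inequality forces `Q' < 0`. -/

theorem le_initial_of_deriv_neg_of_eq_initial {f f' : ℝ → ℝ} {t₀ T : ℝ}
    (hf : ∀ t ∈ Ico t₀ T, HasDerivAt f (f' t) t)
    (hneg : ∀ t ∈ Ico t₀ T, f t = f t₀ → f' t < 0) :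
    ∀ t ∈ Ico t₀ T, f t ≤ f t₀ := by
  intro t ht
  have hIcc : Icc t₀ t ⊆ Ico t₀ T := fun x hx => ⟨hx.1, hx.2.trans_lt ht.2⟩
  have hIco : Ico t₀ t ⊆ Ico t₀ T := fun x hx => ⟨hx.1, hx.2.trans ht.2⟩
  exact image_le_of_deriv_right_lt_deriv_boundary (B := fun _ => f t₀) (B' := fun _ => 0)
    (fun x hx => (hf x (hIcc hx)).continuousAt.continuousWithinAt)
    (fun x hx => (hf x (hIco hx)).hasDerivWithinAt) le_rfl
    (fun x => hasDerivAt_const x (f t₀)) (fun x hx => hneg x (hIco hx)) ⟨ht.1, le_rfl⟩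

theorem mul_exp_le_of_mul_le_deriv {v v' : ℝ → ℝ} {k t₀ T : ℝ}
    (hv : ∀ t ∈ Ico t₀ T, HasDerivAt v (v' t) t)
    (hk : ∀ t ∈ Ico t₀ T, k * v t ≤ v' t) :
    ∀ t ∈ Ico t₀ T, v t₀ * exp (k * (t - t₀)) ≤ v t := by
  set g : ℝ → ℝ := fun t => v t * exp (-k * (t - t₀))
  have hg : ∀ t ∈ Ico t₀ T, HasDerivAt g ((v' t - k * v t) * exp (-k * (t - t₀))) t := by
    intro t ht
    have hexp := (((hasDerivAt_id' t).sub_const t₀).const_mul (-k)).exp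
    exact ((hv t ht).mul hexp).congr_deriv (by ring)
  have hmono : MonotoneOn g (Ico t₀ T) := by
    refine monotoneOn_of_hasDerivWithinAt_nonneg (convex_Ico t₀ T)
      (fun t ht => (hg t ht).continuousAt.continuousWithinAt)
      (fun t ht => (hg t (interior_subset ht)).hasDerivWithinAt) fun t ht => ?_
    have ht' := interior_subset ht
    exact mul_nonneg (sub_nonneg.mpr (hk t ht')) (exp_pos _).le
  intro t ht
  have hg_le : g t₀ ≤ g t := hmono ⟨le_rfl, ht.1.trans_lt ht.2⟩ ht ht.1
  have hgt : g t * exp (k * (t - t₀)) = v t := by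
    simp only [g, mul_assoc, ← exp_add, neg_mul, neg_add_cancel, exp_zero, mul_one]
  calc v t₀ * exp (k * (t - t₀)) = g t₀ * exp (k * (t - t₀)) := by simp [g]
    _ ≤ g t * exp (k * (t - t₀)) := by gcongr
    _ = v t := hgt

theorem mul_ratio_le_deriv_ratio_of_riccati {a c q q' : ℝ} (ha : 0 ≤ a) (hq : q ≠ a)
    (h : q' ≤ -c * (q - a) * (q + a)) :
    2 * a * c * ((q + a) / (q - a)) ≤ (q' * (q - a) - (q + a) * q') / (q - a) ^ 2 := by
  have hqa : q - a ≠ 0 := sub_ne_zero.mpr hq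
  have hlhs : 2 * a * c * ((q + a) / (q - a)) = 2 * a * (c * (q - a) * (q + a)) / (q - a) ^ 2 := by
    field_simp
  rw [hlhs, show q' * (q - a) - (q + a) * q' = 2 * a * -q' by ring]
  gcongr
  linarith

theorem riccati_ratio_estimate {Q Q' : ℝ → ℝ} {a c t₀ T : ℝ} (ha : 0 < a) (hc : 0 < c)
    (hQ' : ∀ t ∈ Ico t₀ T, HasDerivAt Q (Q' t) t) (h0 : Q t₀ < -a)
    (hineq : ∀ t ∈ Ico t₀ T, Q' t ≤ -c * (Q t - a) * (Q t + a)) :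
    ∀ t ∈ Ico t₀ T,
      (Q t₀ + a) / (Q t₀ - a) * exp (2 * a * c * (t - t₀)) - 1 ≤ 2 * a / (Q t - a) ∧
        2 * a / (Q t - a) < 0 := by
  have hbelow : ∀ t ∈ Ico t₀ T, Q t ≤ Q t₀ :=
    le_initial_of_deriv_neg_of_eq_initial hQ' fun t ht hQt => by
      have hpos : 0 < c * ((Q t₀ - a) * (Q t₀ + a)) :=
        mul_pos hc (mul_pos_of_neg_of_neg (by linarith) (by linarith))
      have := hineq t ht
      rw [hQt] at this
      linarith
  have hden : ∀ t ∈ Ico t₀ T, Q t - a < 0 := fun t ht => by linarith [hbelow t ht]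
  have hratio := mul_exp_le_of_mul_le_deriv (v := fun t => (Q t + a) / (Q t - a))
    (fun t ht => ((hQ' t ht).add_const a).div ((hQ' t ht).sub_const a) (hden t ht).ne)
    (fun t ht => mul_ratio_le_deriv_ratio_of_riccati ha.le (by linarith [hden t ht]) (hineq t ht))
  intro t ht
  have hsub : (Q t + a) / (Q t - a) - 1 = 2 * a / (Q t - a) := by
    field_simp [(hden t ht).ne]
    ring
  exact ⟨hsub ▸ sub_le_sub_right (hratio t ht) 1,
    div_neg_of_pos_of_neg (by linarith) (hden t ht)⟩

theorem riccati_explicit_estimate_general (E₀ T : ℝ) (hE : 0 < E₀) (Q Q' : ℝ → ℝ)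
    (hQ' : ∀ t ∈ Set.Ico 0 T, HasDerivAt Q (Q' t) t)
    (h0 : Q 0 < -9 * E₀ * Real.sqrt (2 * E₀))
    (hineq : ∀ t ∈ Set.Ico 0 T, Q' t ≤ -(1 / (6 * E₀)) *
      (Q t - 9 * E₀ * Real.sqrt (2 * E₀)) * (Q t + 9 * E₀ * Real.sqrt (2 * E₀))) :
    ∀ t ∈ Set.Ico 0 T,
      ((Q 0 + 9 * E₀ * Real.sqrt (2 * E₀)) / (Q 0 - 9 * E₀ * Real.sqrt (2 * E₀))) *
          Real.exp ((3 / 2) * Real.sqrt (2 * E₀) * t) - 1 ≤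
        18 * E₀ * Real.sqrt (2 * E₀) / (Q t - 9 * E₀ * Real.sqrt (2 * E₀)) ∧
      18 * E₀ * Real.sqrt (2 * E₀) / (Q t - 9 * E₀ * Real.sqrt (2 * E₀)) ≤ 0 := by
  set s := Real.sqrt (2 * E₀)
  have hs : 0 < s := Real.sqrt_pos.mpr (by linarith)
  have ha : 0 < 9 * E₀ * s := by positivity
  have hrate : 2 * (9 * E₀ * s) * (1 / (6 * E₀)) = 3 * s := by field_simp; ring
  intro t ht
  obtain ⟨hlower, hneg⟩ :=
    riccati_ratio_estimate ha (by positivity) hQ' (by linarith) hineq t ht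
  rw [hrate, sub_zero] at hlower
  have hratio0 : 0 < (Q 0 + 9 * E₀ * s) / (Q 0 - 9 * E₀ * s) :=
    div_pos_of_neg_of_neg (by linarith) (by linarith)
  have hexp : exp (3 / 2 * s * t) ≤ exp (3 * s * t) := exp_le_exp.mpr (by nlinarith [ht.1])
  rw [show 18 * E₀ * s = 2 * (9 * E₀ * s) by ring]
  exact ⟨(sub_le_sub_right (mul_le_mul_of_nonneg_left hexp hratio0.le) 1).trans hlower,
    hneg.le⟩

/-- Explicit solution estimate (2.16) for the Riccati differential inequality. -/
theorem riccati_explicit_estimate (E₀ T : ℝ) (hE : 0 < E₀) (hT : 0 < T) (Q Q' : ℝ → ℝ)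
    (hQ' : ∀ t ∈ Set.Ico 0 T, HasDerivAt Q (Q' t) t)
    (hQ'cont : ContinuousOn Q' (Set.Ico 0 T))
    (h0 : Q 0 < -9 * E₀ * Real.sqrt (2 * E₀))
    (hineq : ∀ t ∈ Set.Ico 0 T, Q' t ≤ -(1 / (6 * E₀)) *
      (Q t - 9 * E₀ * Real.sqrt (2 * E₀)) * (Q t + 9 * E₀ * Real.sqrt (2 * E₀))) :
    ∀ t ∈ Set.Ico 0 T,
      ((Q 0 + 9 * E₀ * Real.sqrt (2 * E₀)) / (Q 0 - 9 * E₀ * Real.sqrt (2 * E₀))) *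
          Real.exp ((3 / 2) * Real.sqrt (2 * E₀) * t) - 1 ≤
        18 * E₀ * Real.sqrt (2 * E₀) / (Q t - 9 * E₀ * Real.sqrt (2 * E₀)) ∧
      18 * E₀ * Real.sqrt (2 * E₀) / (Q t - 9 * E₀ * Real.sqrt (2 * E₀)) ≤ 0 :=
  riccati_explicit_estimate_general E₀ T hE Q Q' hQ' h0 hineq
end
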